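/- arXiv:math/0402358 — 7 statements merged into one kernel-verified Lean document; each statement's English description precedes it below -/
import Mathlib

section
/- Let α > 2 and K > 0 be real constants. Let f : [0,∞) → ℝ be a continuous function satisfying |f(ρ) − 1| ≤ K·e^{−αρ} and f(ρ) ≥ 1/4 for all ρ ≥ 0. Let y : [0,∞) → ℝ be differentiable with y′(ρ) + y(ρ)² = f(ρ) for all ρ ≥ 0, and y(0) > 0. Then there exists a constant C > 0, depending only on K, α and y(0), such that |y(ρ) − 1| ≤ C·e^{−2ρ} for all ρ ≥ 0. -/
/-!
A solution with `y 0 > 0` never drops below `m = min (y 0) (1/4)`, since `y' = f - m² > 0` whenever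
`y = m`. Then `u = y - 1` solves the linear equation `u' = (f - 1) - (y + 1) u` with damping
`y + 1 ≥ 1 + m > 1` and forcing `O(e^{-αρ})`, so it decays like `e^{-βρ}` for some `β > 1`. Writing
the same equation as `u' = (f - 1 - u²) - 2u`, the forcing is now `O(e^{-2βρ})` with `2β > 2`, and
this gives decay at the rate `e^{-2ρ}`.
-/

open Real Set

theorem image_le_of_deriv_lt_deriv_boundary_Ici {f f' B B' : ℝ → ℝ}
    (hf : ∀ t ≥ (0 : ℝ), HasDerivAt f (f' t) t) (hB : ∀ t ≥ (0 : ℝ), HasDerivAt B (B' t) t)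
    (h0 : f 0 ≤ B 0) (bound : ∀ t ≥ (0 : ℝ), f t = B t → f' t < B' t) :
    ∀ t ≥ (0 : ℝ), f t ≤ B t := fun T hT =>
  image_le_of_deriv_right_lt_deriv_boundary' (a := 0) (b := T)
    (fun t ht => (hf t ht.1).continuousAt.continuousWithinAt)
    (fun t ht => (hf t ht.1).hasDerivWithinAt) h0
    (fun t ht => (hB t ht.1).continuousAt.continuousWithinAt)
    (fun t ht => (hB t ht.1).hasDerivWithinAt) (fun t ht => bound t ht.1) ⟨hT, le_rfl⟩

theorem le_of_hasDerivAt_riccati {f y : ℝ → ℝ} {m : ℝ}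
    (hy : ∀ t ≥ (0 : ℝ), HasDerivAt y (f t - y t ^ 2) t) (hf : ∀ t ≥ (0 : ℝ), m ^ 2 < f t)
    (h0 : m ≤ y 0) : ∀ t ≥ (0 : ℝ), m ≤ y t :=
  image_le_of_deriv_lt_deriv_boundary_Ici (fun t _ => hasDerivAt_const t m) hy h0
    fun t ht hmt => by rw [← hmt]; linarith [hf t ht]

theorem lt_mul_div_add_one {A d : ℝ} (hd : 0 < d) : A < d * (A / d + 1) := by
  rw [mul_add, mul_div_cancel₀ _ hd.ne', mul_one]
  linarith

theorem hasDerivAt_exp_neg_mul (a t : ℝ) :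
    HasDerivAt (fun s => exp (-a * s)) (-a * exp (-a * t)) t := by
  simpa [mul_comm] using ((hasDerivAt_id t).const_mul (-a)).exp

theorem abs_sub_sq_le_of_exp_decay {g u K C α β t : ℝ} (ht : 0 ≤ t) (hβα : 2 * β ≤ α)
    (hg : |g| ≤ K * exp (-α * t)) (hu : |u| ≤ C * exp (-β * t)) :
    |g - u ^ 2| ≤ (K + C ^ 2) * exp (-(2 * β) * t) := by
  have hK : 0 ≤ K := (mul_nonneg_iff_of_pos_right (exp_pos _)).1 ((abs_nonneg g).trans hg)
  have hsq : u ^ 2 ≤ C ^ 2 * exp (-(2 * β) * t) :=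
    calc u ^ 2 = |u| ^ 2 := (sq_abs u).symm
      _ ≤ (C * exp (-β * t)) ^ 2 := by gcongr
      _ = C ^ 2 * exp (-(2 * β) * t) := by rw [mul_pow, ← exp_nat_mul]; ring_nf
  calc |g - u ^ 2| ≤ |g| + u ^ 2 := (abs_sub _ _).trans_eq (by rw [abs_of_nonneg (sq_nonneg u)])
    _ ≤ K * exp (-(2 * β) * t) + C ^ 2 * exp (-(2 * β) * t) := by
        gcongr; exact hg.trans (by gcongr)
    _ = (K + C ^ 2) * exp (-(2 * β) * t) := by ring

section LinearDecay

variable {u e p : ℝ → ℝ} {a b A N : ℝ}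

/-- Comparison with the barrier `(|u 0| + N) e^{-at} - N e^{-bt}`, which is strict because
`A < (b - a) N`. -/
theorem le_exp_of_hasDerivAt_linear (hu : ∀ t ≥ (0 : ℝ), HasDerivAt u (e t - p t * u t) t)
    (hp : ∀ t ≥ (0 : ℝ), a ≤ p t) (he : ∀ t ≥ (0 : ℝ), e t ≤ A * exp (-b * t)) (hab : a < b)
    (hN₀ : 0 ≤ N) (hN : A < (b - a) * N) :
    ∀ t ≥ (0 : ℝ), u t ≤ (|u 0| + N) * exp (-a * t) := by
  set M := |u 0| + N
  have hB (t : ℝ) : HasDerivAt (fun s => M * exp (-a * s) - N * exp (-b * s))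
      (M * (-a * exp (-a * t)) - N * (-b * exp (-b * t))) t :=
    ((hasDerivAt_exp_neg_mul a t).const_mul M).sub ((hasDerivAt_exp_neg_mul b t).const_mul N)
  have barrier := image_le_of_deriv_lt_deriv_boundary_Ici hu (fun t _ => hB t)
    (by simp [M, le_abs_self]) fun t ht hut => by
      have hexp : exp (-b * t) ≤ exp (-a * t) := exp_le_exp.2 (by nlinarith)
      have hut₀ : 0 ≤ u t := by
        rw [hut]; nlinarith [exp_pos (-b * t), abs_nonneg (u 0)]
      have hdamp : a * u t ≤ p t * u t := mul_le_mul_of_nonneg_right (hp t ht) hut₀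
      have hforce := mul_lt_mul_of_pos_right hN (exp_pos (-b * t))
      have hau : a * u t = a * M * exp (-a * t) - a * N * exp (-b * t) := by rw [hut]; ring
      linarith [he t ht]
  intro t ht
  linarith [barrier t ht, mul_nonneg hN₀ (exp_pos (-b * t)).le]

theorem abs_le_exp_of_hasDerivAt_linear (hu : ∀ t ≥ (0 : ℝ), HasDerivAt u (e t - p t * u t) t)
    (hp : ∀ t ≥ (0 : ℝ), a ≤ p t) (he : ∀ t ≥ (0 : ℝ), |e t| ≤ A * exp (-b * t)) (hab : a < b)
    (hN : A < (b - a) * N) :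
    ∀ t ≥ (0 : ℝ), |u t| ≤ (|u 0| + N) * exp (-a * t) := by
  have hA : 0 ≤ A := by simpa using (abs_nonneg _).trans (he 0 le_rfl)
  have hN₀ : 0 ≤ N := by nlinarith
  have upper := le_exp_of_hasDerivAt_linear hu hp
    (fun t ht => (le_abs_self _).trans (he t ht)) hab hN₀ hN
  have lower := le_exp_of_hasDerivAt_linear (u := -u) (e := -e)
    (fun t ht => (hu t ht).neg.congr_deriv (by simp only [Pi.neg_apply]; ring)) hp
    (fun t ht => (neg_le_abs _).trans (he t ht)) hab hN₀ hN
  intro t ht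
  have hlower := lower t ht
  simp only [Pi.neg_apply, abs_neg] at hlower
  exact abs_le.2 ⟨by linarith, upper t ht⟩

end LinearDecay

/-- **Lemma 2.3.** Let `α > 2` and `K > 0`. For any continuous `f : [0,∞) → ℝ` with
`|f ρ - 1| ≤ K·exp(-α ρ)` and `f ρ ≥ 1/4`, and any differentiable `y` with
`y' + y² = f` and `y 0 = y₀ > 0`, we have `|y ρ - 1| ≤ C·exp(-2ρ)` where `C > 0`
depends only on `K`, `α` and `y₀`. -/
theorem riccati_decay (α K y₀ : ℝ) (hα : 2 < α) (hK : 0 < K) (hy₀ : 0 < y₀) :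
    ∃ C > 0, ∀ f y : ℝ → ℝ,
      ContinuousOn f (Set.Ici 0) →
      (∀ ρ ≥ (0:ℝ), |f ρ - 1| ≤ K * Real.exp (-α * ρ)) →
      (∀ ρ ≥ (0:ℝ), 1/4 ≤ f ρ) →
      (∀ ρ ≥ (0:ℝ), HasDerivAt y (f ρ - (y ρ)^2) ρ) →
      y 0 = y₀ →
      ∀ ρ ≥ (0:ℝ), |y ρ - 1| ≤ C * Real.exp (-2 * ρ) := by
  set m := min y₀ (1 / 4)
  set β := min (1 + m) (α / 2)
  have hm₀ : 0 < m := lt_min hy₀ (by norm_num)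
  have hβ₁ : 1 < β := lt_min (by linarith) (by linarith)
  have hβα : 2 * β ≤ α := by linarith [min_le_right (1 + m) (α / 2)]
  set C₁ := |y₀ - 1| + (K / (α - β) + 1)
  set N₂ := (K + C₁ ^ 2) / (2 * β - 2) + 1
  have hN₂ : 0 < N₂ := add_pos_of_nonneg_of_pos (div_nonneg (by positivity) (by linarith)) one_pos
  refine ⟨|y₀ - 1| + N₂, by positivity, fun f y _ hf hf₄ hy hy0 => ?_⟩
  have hy_sub (t : ℝ) (ht : t ≥ 0) : HasDerivAt (fun s => y s - 1) (f t - y t ^ 2) t :=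
    (hy t ht).sub_const 1
  have hm : ∀ t ≥ (0 : ℝ), m ≤ y t := le_of_hasDerivAt_riccati hy
    (fun t ht => by nlinarith [hf₄ t ht, min_le_right y₀ (1 / 4)]) (hy0 ▸ min_le_left _ _)
  have hrate_β : ∀ t ≥ (0 : ℝ), |y t - 1| ≤ C₁ * exp (-β * t) := by
    simpa only [hy0] using abs_le_exp_of_hasDerivAt_linear (e := fun t => f t - 1)
      (p := fun t => y t + 1) (fun t ht => (hy_sub t ht).congr_deriv (by ring))
      (fun t ht => by linarith [hm t ht, min_le_left (1 + m) (α / 2)]) hf (by linarith)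
      (lt_mul_div_add_one (by linarith))
  simpa only [hy0] using abs_le_exp_of_hasDerivAt_linear (e := fun t => f t - 1 - (y t - 1) ^ 2)
    (p := fun _ => 2) (fun t ht => (hy_sub t ht).congr_deriv (by ring)) (fun _ _ => le_rfl)
    (fun t ht => abs_sub_sq_le_of_exp_decay ht hβα (hf t ht) (hrate_β t ht)) (by linarith)
    (lt_mul_div_add_one (by linarith))
end

section
/- Let α > 2 and K > 0 be real constants. Let f : [0,∞) → ℝ be continuous with |f(ρ) − 1| ≤ K·e^{−αρ} and f(ρ) ≥ 1/4 for all ρ ≥ 0. Let y : [0,∞) → ℝ be differentiable with y′(ρ) + y(ρ)² = f(ρ) for all ρ ≥ 0 and y(0) > 0. Then there exists a constant C₁ > 0, depending only on K, α and y(0), such that 0 < y(ρ) ≤ ρ + C₁ for all ρ ≥ 0. -/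
/-- Barrier lemma: if `y 0 < c` and the derivative is negative at every point `ρ ≥ 0`
where `y ρ = c`, then `y` stays below `c` on `[0, ∞)`. -/
lemma riccati_barrier (y g : ℝ → ℝ) (hy : ∀ ρ ≥ (0:ℝ), HasDerivAt y (g ρ) ρ)
    (c : ℝ) (h0 : y 0 < c) (hc : ∀ ρ ≥ (0:ℝ), y ρ = c → g ρ < 0) :
    ∀ ρ ≥ (0:ℝ), y ρ < c := by
  by_contra h
  push_neg at h
  obtain ⟨ρ₁, hρ₁, hcy⟩ := h
  set S := {ρ : ℝ | 0 ≤ ρ ∧ c ≤ y ρ} with hS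
  have hne : S.Nonempty := ⟨ρ₁, hρ₁, hcy⟩
  have hbdd : BddBelow S := ⟨0, fun x hx => hx.1⟩
  set ρ₀ := sInf S with hρ₀def
  have hρ₀0 : 0 ≤ ρ₀ := le_csInf hne fun x hx => hx.1
  have hcont : ContinuousAt y ρ₀ := (hy ρ₀ hρ₀0).continuousAt
  -- c ≤ y ρ₀
  have hyge : c ≤ y ρ₀ := by
    by_contra hlt
    push_neg at hlt
    rw [Metric.continuousAt_iff] at hcont
    obtain ⟨δ, hδ, hδ'⟩ := hcont (c - y ρ₀) (by linarith)
    obtain ⟨x, hxS, hxlt⟩ := exists_lt_of_csInf_lt hne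
      (lt_add_of_pos_right ρ₀ hδ : ρ₀ < ρ₀ + δ)
    have hxge : ρ₀ ≤ x := csInf_le hbdd hxS
    have hd : |y x - y ρ₀| < c - y ρ₀ := by
      apply hδ'
      rw [Real.dist_eq]
      rw [abs_lt]; constructor <;> linarith
    have hd2 := abs_lt.mp hd
    have hd3 := hxS.2
    linarith [hd2.2]
  -- y ρ₀ = c
  have hyeq : y ρ₀ = c := by
    by_contra hne'
    have hgt : c < y ρ₀ := lt_of_le_of_ne hyge (Ne.symm hne')
    have hρ₀pos : 0 < ρ₀ := by
      rcases lt_or_eq_of_le hρ₀0 with h | h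
      · exact h
      · exfalso; rw [← h] at hgt; linarith
    rw [Metric.continuousAt_iff] at hcont
    obtain ⟨δ, hδ, hδ'⟩ := hcont (y ρ₀ - c) (by linarith)
    set x := ρ₀ - min δ ρ₀ / 2 with hx
    have hmin : 0 < min δ ρ₀ := lt_min hδ hρ₀pos
    have hx0 : 0 ≤ x := by
      have : min δ ρ₀ ≤ ρ₀ := min_le_right _ _
      simp only [hx]; linarith
    have hdist : |y x - y ρ₀| < y ρ₀ - c := by
      apply hδ'
      rw [Real.dist_eq]
      have h1 : min δ ρ₀ ≤ δ := min_le_left _ _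
      rw [abs_lt]; constructor <;> simp only [hx] <;> linarith
    have := abs_lt.mp hdist
    have hxS : x ∈ S := ⟨hx0, by linarith [this.1]⟩
    have : ρ₀ ≤ x := csInf_le hbdd hxS
    simp only [hx] at this; linarith
  have hρ₀pos : 0 < ρ₀ := by
    rcases lt_or_eq_of_le hρ₀0 with h | h
    · exact h
    · exfalso; rw [← h] at hyeq; linarith
  -- derivative negative at ρ₀, get a point x < ρ₀ in S
  have hgneg : g ρ₀ < 0 := hc ρ₀ hρ₀0 hyeq
  have hslope : Filter.Tendsto (slope y ρ₀) (nhdsWithin ρ₀ {ρ₀}ᶜ) (nhds (g ρ₀)) :=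
    hasDerivAt_iff_tendsto_slope.mp (hy ρ₀ hρ₀0)
  have hslope' : Filter.Tendsto (slope y ρ₀) (nhdsWithin ρ₀ (Set.Iio ρ₀)) (nhds (g ρ₀)) :=
    hslope.mono_left (nhdsWithin_mono _ (fun x hx => ne_of_lt hx))
  have hev1 : ∀ᶠ x in nhdsWithin ρ₀ (Set.Iio ρ₀), slope y ρ₀ x < 0 :=
    hslope' (Iio_mem_nhds hgneg)
  have hev2 : ∀ᶠ x in nhdsWithin ρ₀ (Set.Iio ρ₀), (0:ℝ) < x :=
    eventually_nhdsWithin_of_eventually_nhds (eventually_gt_nhds hρ₀pos)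
  have hev3 : ∀ᶠ x in nhdsWithin ρ₀ (Set.Iio ρ₀), x < ρ₀ :=
    eventually_mem_nhdsWithin.mono (fun x hx => hx)
  obtain ⟨x, hx1, hx2, hx3⟩ := (hev1.and (hev2.and hev3)).exists
  -- slope y ρ₀ x = (y x - y ρ₀)/(x - ρ₀) < 0 and x < ρ₀ ⇒ y x > y ρ₀ = c
  have hxρ : x - ρ₀ < 0 := by linarith
  rw [slope_def_field] at hx1
  have hyx : c < y x := by
    rcases div_neg_iff.mp hx1 with ⟨h1, h2⟩ | ⟨h1, h2⟩
    · linarith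
    · linarith
  have hxS : x ∈ S := ⟨le_of_lt hx2, le_of_lt hyx⟩
  have : ρ₀ ≤ x := csInf_le hbdd hxS
  linarith

/-- **Claim 1 in the proof of Lemma 2.3.** A solution of the Riccati equation
`y' + y² = f` with `f ≥ 1/4`, `|f - 1| ≤ K·exp(-αρ)` and `y 0 = y₀ > 0` stays positive
and grows at most linearly: `0 < y ρ ≤ ρ + C₁`, with `C₁ > 0` depending only on
`K`, `α` and `y₀`. -/
theorem riccati_linear_growth (α K y₀ : ℝ) (hα : 2 < α) (hK : 0 < K) (hy₀ : 0 < y₀) :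
    ∃ C₁ > 0, ∀ f y : ℝ → ℝ,
      ContinuousOn f (Set.Ici 0) →
      (∀ ρ ≥ (0:ℝ), |f ρ - 1| ≤ K * Real.exp (-α * ρ)) →
      (∀ ρ ≥ (0:ℝ), 1/4 ≤ f ρ) →
      (∀ ρ ≥ (0:ℝ), HasDerivAt y (f ρ - (y ρ)^2) ρ) →
      y 0 = y₀ →
      ∀ ρ ≥ (0:ℝ), 0 < y ρ ∧ y ρ ≤ ρ + C₁ := by
  refine ⟨max y₀ (Real.sqrt (1 + K)) + 1, by positivity, ?_⟩
  intro f y hfc hfK hf4 hy hy0 ρ hρ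
  set c := max y₀ (Real.sqrt (1 + K)) + 1 with hc
  have hfub : ∀ s ≥ (0:ℝ), f s ≤ 1 + K := by
    intro s hs
    have h1 := hfK s hs
    have h2 : Real.exp (-α * s) ≤ 1 := by
      apply Real.exp_le_one_iff.mpr
      nlinarith
    have := abs_le.mp h1
    nlinarith
  constructor
  · -- positivity: lower barrier at m = min y₀ (1/2) / 2
    set m := min y₀ (1/2) / 2 with hm
    have hm0 : 0 < m := by
      have := lt_min hy₀ (by norm_num : (0:ℝ) < 1/2)
      positivity
    have hmlt : m < 1/2 := by
      have : min y₀ (1/2) ≤ 1/2 := min_le_right _ _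
      simp only [hm]; linarith
    have hmy₀ : m < y₀ := by
      have : min y₀ (1/2) ≤ y₀ := min_le_left _ _
      simp only [hm]; linarith
    have := riccati_barrier (fun s => -(y s)) (fun s => -(f s - (y s)^2))
      (fun s hs => (hy s hs).neg) (-m)
      (by simp [hy0]; linarith)
      (by
        intro s hs heq
        have heq' : -y s = -m := heq
        have hys : y s = m := by linarith
        have h4 := hf4 s hs
        show -(f s - (y s)^2) < 0
        rw [hys]; nlinarith) ρ hρ
    linarith
  · -- upper bound: barrier at c
    have hsq : Real.sqrt (1 + K) ^ 2 = 1 + K := Real.sq_sqrt (by linarith)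
    have hcs : Real.sqrt (1 + K) < c := by
      have : Real.sqrt (1 + K) ≤ max y₀ (Real.sqrt (1 + K)) := le_max_right _ _
      simp only [hc]; linarith
    have hsnn : 0 ≤ Real.sqrt (1 + K) := Real.sqrt_nonneg _
    have := riccati_barrier y (fun s => f s - (y s)^2) hy c
      (by
        have : y₀ ≤ max y₀ (Real.sqrt (1 + K)) := le_max_left _ _
        rw [hy0]; simp only [hc]; linarith)
      (by
        intro s hs heq
        have hfs := hfub s hs
        show f s - (y s)^2 < 0
        rw [heq]
        have : 1 + K < c ^ 2 := by
          calc 1 + K = Real.sqrt (1 + K) ^ 2 := hsq.symm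
            _ < c ^ 2 := by nlinarith
        linarith) ρ hρ
    linarith
end

section
/- Let α > 2 and K > 0 be real constants. Let f : [0,∞) → ℝ be continuous with |f(ρ) − 1| ≤ K·e^{−αρ} and f(ρ) ≥ 1/4 for all ρ ≥ 0. Let y : [0,∞) → ℝ be differentiable with y′(ρ) + y(ρ)² = f(ρ) for all ρ ≥ 0 and y(0) > 0. Then there exists a constant C₂ > 0, depending only on K, α and y(0), such that |y(ρ) − 1| ≤ C₂·e^{−ρ} for all ρ ≥ 0. -/
/-!
Because `f > 0`, a solution starting at `y₀ > 0` can never reach `0`, and because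
`f ≤ 1 + K < M²` with `M = y₀ + K + 1` it can never reach `M`; so `0 ≤ y ≤ M`. Along the flow
`(y - 1)² e^{2t}` has derivative `2 e^{2t} ((y - 1)(f - 1) - y (y - 1)²) ≤ 2 M K e^{(2-α)t}`,
so adding `2 M K/(α - 2) · e^{(2-α)t}` (which decays because `α > 2`) gives a nonincreasing
Lyapunov function. Comparing its values at `ρ` and `0` bounds `(y ρ - 1)² e^{2ρ}`.
-/

open Real Set

theorem le_of_hasDerivAt_neg_of_eq {g g' : ℝ → ℝ} {a c : ℝ}
    (hg : ∀ t ≥ a, HasDerivAt g (g' t) t) (ha : g a ≤ c) (hc : ∀ t ≥ a, g t = c → g' t < 0) :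
    ∀ t ≥ a, g t ≤ c := fun _ ht =>
  image_le_of_deriv_right_lt_deriv_boundary (B := fun _ => c) (B' := fun _ => 0)
    (fun x hx => (hg x hx.1).continuousAt.continuousWithinAt)
    (fun x hx => (hg x hx.1).hasDerivWithinAt) ha (fun x => hasDerivAt_const x c)
    (fun x hx => hc x hx.1) ⟨ht, le_rfl⟩

theorem abs_le_sqrt_mul_exp_neg {x ρ A : ℝ} (h : x ^ 2 * exp (2 * ρ) ≤ A) :
    |x| ≤ √A * exp (-ρ) := by
  have hsq : (x * exp ρ) ^ 2 = x ^ 2 * exp (2 * ρ) := by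
    rw [mul_pow, ← exp_nat_mul]; norm_num
  calc |x| = |x * exp ρ| * exp (-ρ) := by
        rw [abs_mul, abs_of_pos (exp_pos ρ), mul_assoc, ← exp_add, add_neg_cancel, exp_zero,
          mul_one]
    _ ≤ √A * exp (-ρ) := by gcongr; exact abs_le_sqrt (hsq ▸ h)

section Riccati

variable {f y : ℝ → ℝ} (hy : ∀ t ≥ 0, HasDerivAt y (f t - y t ^ 2) t)
include hy

theorem riccati_nonneg (hf : ∀ t ≥ 0, 0 < f t) (h0 : 0 ≤ y 0) : ∀ t ≥ 0, 0 ≤ y t := by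
  have := le_of_hasDerivAt_neg_of_eq (fun t ht => (hy t ht).neg) (neg_nonpos.2 h0)
    fun t ht hyt => by simpa [neg_eq_zero.1 hyt] using hf t ht
  exact fun t ht => neg_nonpos.1 (this t ht)

theorem riccati_le {M : ℝ} (hf : ∀ t ≥ 0, f t < M ^ 2) (h0 : y 0 ≤ M) : ∀ t ≥ 0, y t ≤ M :=
  le_of_hasDerivAt_neg_of_eq hy h0 fun t ht hyt => by rw [hyt, sub_neg]; exact hf t ht

theorem hasDerivAt_riccati_sub_one_sq_mul_exp {t : ℝ} (ht : 0 ≤ t) :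
    HasDerivAt (fun s => (y s - 1) ^ 2 * exp (2 * s))
      (2 * exp (2 * t) * ((y t - 1) * (f t - 1) - y t * (y t - 1) ^ 2)) t := by
  refine ((((hy t ht).sub_const 1).fun_pow 2).fun_mul
    ((hasDerivAt_id' t).const_mul 2).exp).congr_deriv ?_
  norm_num
  ring

theorem riccati_lyapunov_antitoneOn {α K L : ℝ} (hα : 2 < α) (hy_nonneg : ∀ t ≥ 0, 0 ≤ y t)
    (hyL : ∀ t ≥ 0, |y t - 1| ≤ L) (hf : ∀ t ≥ 0, |f t - 1| ≤ K * exp (-α * t)) :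
    AntitoneOn (fun t => (y t - 1) ^ 2 * exp (2 * t) + 2 * L * K / (α - 2) * exp ((2 - α) * t))
      (Ici 0) := by
  have hderiv (t : ℝ) (ht : 0 ≤ t) : HasDerivAt
      (fun t => (y t - 1) ^ 2 * exp (2 * t) + 2 * L * K / (α - 2) * exp ((2 - α) * t))
      (2 * exp (2 * t) * ((y t - 1) * (f t - 1) - y t * (y t - 1) ^ 2) +
        2 * L * K / (α - 2) * (exp ((2 - α) * t) * (2 - α))) t :=
    (hasDerivAt_riccati_sub_one_sq_mul_exp hy ht).add
      ((((hasDerivAt_id' t).const_mul (2 - α)).exp.congr_deriv (by ring)).const_mul _)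
  refine antitoneOn_of_hasDerivWithinAt_nonpos (convex_Ici 0)
    (fun t ht => (hderiv t ht).continuousAt.continuousWithinAt)
    (fun t ht => (hderiv t (interior_subset ht)).hasDerivWithinAt) fun t ht => ?_
  replace ht : 0 ≤ t := interior_subset ht
  have hcross : (y t - 1) * (f t - 1) ≤ L * (K * exp (-α * t)) :=
    (le_abs_self _).trans <| abs_mul (y t - 1) (f t - 1) ▸
      mul_le_mul (hyL t ht) (hf t ht) (abs_nonneg _) ((abs_nonneg _).trans (hyL t ht))
  have hdamp : 0 ≤ y t * (y t - 1) ^ 2 := mul_nonneg (hy_nonneg t ht) (sq_nonneg _)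
  have hexp : exp ((2 - α) * t) = exp (2 * t) * exp (-α * t) := by rw [← exp_add]; ring_nf
  have hcoef : 2 * L * K / (α - 2) * (exp ((2 - α) * t) * (2 - α)) =
      -(2 * exp (2 * t) * (L * (K * exp (-α * t)))) := by
    rw [hexp]; field_simp [(sub_pos.2 hα).ne']; ring
  rw [hcoef]
  nlinarith [exp_pos (2 * t)]

end Riccati

/-- **Claim 2 in the proof of Lemma 2.3.** A solution of the Riccati equation
`y' + y² = f` with `f ≥ 1/4`, `|f - 1| ≤ K·exp(-αρ)` (`α > 2`) and `y 0 = y₀ > 0`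
satisfies the preliminary decay estimate `|y ρ - 1| ≤ C₂·exp(-ρ)`, with `C₂ > 0`
depending only on `K`, `α` and `y₀`. -/
theorem riccati_preliminary_decay (α K y₀ : ℝ) (hα : 2 < α) (hK : 0 < K) (hy₀ : 0 < y₀) :
    ∃ C₂ > 0, ∀ f y : ℝ → ℝ,
      ContinuousOn f (Set.Ici 0) →
      (∀ ρ ≥ (0:ℝ), |f ρ - 1| ≤ K * Real.exp (-α * ρ)) →
      (∀ ρ ≥ (0:ℝ), 1/4 ≤ f ρ) →
      (∀ ρ ≥ (0:ℝ), HasDerivAt y (f ρ - (y ρ)^2) ρ) →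
      y 0 = y₀ →
      ∀ ρ ≥ (0:ℝ), |y ρ - 1| ≤ C₂ * Real.exp (-ρ) := by
  set M := y₀ + K + 1
  set c := 2 * M * K / (α - 2)
  have hc : 0 < c := div_pos (by positivity) (by linarith)
  refine ⟨√((y₀ - 1) ^ 2 + c), sqrt_pos.2 (by positivity), ?_⟩
  intro f y _ hfK hf4 hy hy0 ρ hρ
  have hfM : ∀ t ≥ 0, f t < M ^ 2 := fun t ht => calc
    f t ≤ 1 + K * exp (-α * t) := by linarith [(abs_le.1 (hfK t ht)).2]
    _ ≤ 1 + K := by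
      gcongr; exact mul_le_of_le_one_right hK.le (exp_le_one_iff.2 (by nlinarith))
    _ < M ^ 2 := by nlinarith
  have hnonneg := riccati_nonneg hy (fun t ht => by linarith [hf4 t ht]) (hy0 ▸ hy₀.le)
  have hle := riccati_le hy hfM (by rw [hy0]; linarith)
  have hL (t : ℝ) (ht : 0 ≤ t) : |y t - 1| ≤ M :=
    abs_le.2 ⟨by linarith [hnonneg t ht], by linarith [hle t ht]⟩
  have hφ := riccati_lyapunov_antitoneOn hy hα hnonneg hL hfK self_mem_Ici hρ hρ
  simp only [hy0, mul_zero, exp_zero, mul_one] at hφ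
  exact abs_le_sqrt_mul_exp_neg (by nlinarith [exp_pos ((2 - α) * ρ)])
end

section
/- Let α > 2, K > 0, C₅ > 0 and β ≥ 1 be real constants. Let v : [0,∞) → ℝ be differentiable, and suppose that for all ρ ≥ 0: (i) the function ρ ↦ v(ρ)² satisfies (v²)′(ρ) + (4 − 2|v(ρ)|)·v(ρ)² ≤ 2K·e^{−αρ}·|v(ρ)|; (ii) |v(ρ)| ≤ C₅·e^{−ρ}; (iii) v(ρ)² ≤ e^{−2βρ}. Then there exists a constant C₇ > 0, depending only on α, K, C₅, β and v(0), such that v(ρ)² ≤ C₇·(e^{−4ρ} + e^{−min(3β, α+β)·ρ}) for all ρ ≥ 0. -/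
/-!
Write `w = v²`. Since `(4 - 2|v|) v² = 4w - 2|v|³`, the hypothesis reads
`w' + 4w ≤ 2|v|³ + 2K e^{-αρ} |v|`, so a decay bound `|v| ≤ D e^{-μρ}` turns the right-hand side
into `O(e^{-νρ})` with `ν = min(3μ, α + μ)`. The integrating factor `e^{bρ}` then gives
`w ≤ C (e^{-bρ} + e^{-νρ})` for every rate `b ≤ 4` with `b ≠ ν`. Starting from `μ = β` this is
the claim with `b = 4`, unless `min(3β, α + β) = 4`. In that resonant case one first takes
`b = 4 - ε`, which yields `|v| ≲ e^{-(2 - ε/2)ρ}`; for small `ε` the new forcing rate exceeds `4`,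
and a second pass with `b = 4` concludes.
-/

open Real Set

theorem le_of_deriv_add_mul_le_mul_exp {w : ℝ → ℝ} {A b ν : ℝ} (hbν : b ≠ ν)
    (hw : ∀ t ≥ 0, DifferentiableAt ℝ w t)
    (hineq : ∀ t ≥ 0, deriv w t + b * w t ≤ A * exp (-ν * t)) {ρ : ℝ} (hρ : 0 ≤ ρ) :
    w ρ ≤ w 0 * exp (-b * ρ) + A * (exp (-ν * ρ) - exp (-b * ρ)) / (b - ν) := by
  have hbν' : b - ν ≠ 0 := sub_ne_zero.mpr hbν
  set g : ℝ → ℝ := fun t => exp (b * t) * w t - A * exp ((b - ν) * t) / (b - ν)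
  have hg : ∀ t ≥ 0,
      HasDerivAt g (exp (b * t) * (deriv w t + b * w t) - A * exp ((b - ν) * t)) t := by
    intro t ht
    refine ((((hasDerivAt_id t).const_mul b).exp.mul (hw t ht).hasDerivAt).sub
      ((((hasDerivAt_id t).const_mul (b - ν)).exp.const_mul A).div_const (b - ν))).congr_deriv ?_
    simp only [id, mul_one]
    field_simp
    ring
  have hanti : AntitoneOn g (Ici 0) := by
    refine antitoneOn_of_deriv_nonpos (convex_Ici 0)
      (fun t ht => (hg t ht).continuousAt.continuousWithinAt) ?_ ?_ <;> rw [interior_Ici]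
    · exact fun t ht => (hg t ht.le).differentiableAt.differentiableWithinAt
    · intro t ht
      have hsplit : exp ((b - ν) * t) = exp (b * t) * exp (-ν * t) := by
        rw [← exp_add]; ring_nf
      rw [(hg t ht.le).deriv, hsplit]
      linarith [mul_le_mul_of_nonneg_left (hineq t ht.le) (exp_pos (b * t)).le]
  have hgρ : exp (b * ρ) * w ρ ≤ w 0 - A / (b - ν) + A * exp ((b - ν) * ρ) / (b - ν) := by
    have := hanti self_mem_Ici hρ hρ
    simp only [g, mul_zero, exp_zero, one_mul, mul_one] at this
    linarith
  have hexp : exp (-ν * ρ) = exp (-b * ρ) * exp ((b - ν) * ρ) := by rw [← exp_add]; ring_nf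
  calc w ρ = exp (-b * ρ) * (exp (b * ρ) * w ρ) := by rw [← mul_assoc, ← exp_add]; simp
    _ ≤ exp (-b * ρ) * (w 0 - A / (b - ν) + A * exp ((b - ν) * ρ) / (b - ν)) := by gcongr
    _ = w 0 * exp (-b * ρ) + A * (exp (-ν * ρ) - exp (-b * ρ)) / (b - ν) := by rw [hexp]; ring

theorem mul_exp_add_div_le {w₀ A b ν ρ : ℝ} (hw₀ : 0 ≤ w₀) (hA : 0 ≤ A) :
    w₀ * exp (-b * ρ) + A * (exp (-ν * ρ) - exp (-b * ρ)) / (b - ν)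
      ≤ (w₀ + A / |b - ν|) * (exp (-b * ρ) + exp (-ν * ρ)) := by
  have hquot : (exp (-ν * ρ) - exp (-b * ρ)) / (b - ν)
      ≤ (exp (-b * ρ) + exp (-ν * ρ)) / |b - ν| := calc
    _ ≤ |exp (-ν * ρ) - exp (-b * ρ)| / |b - ν| := by rw [← abs_div]; exact le_abs_self _
    _ ≤ (exp (-b * ρ) + exp (-ν * ρ)) / |b - ν| := by
      gcongr
      rw [abs_le]
      constructor <;> linarith [exp_pos (-b * ρ), exp_pos (-ν * ρ)]
  have hfirst : w₀ * exp (-b * ρ) ≤ w₀ * (exp (-b * ρ) + exp (-ν * ρ)) :=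
    mul_le_mul_of_nonneg_left (le_add_of_nonneg_right (exp_pos _).le) hw₀
  calc _ = w₀ * exp (-b * ρ) + A * ((exp (-ν * ρ) - exp (-b * ρ)) / (b - ν)) := by ring
    _ ≤ w₀ * (exp (-b * ρ) + exp (-ν * ρ)) + A * ((exp (-b * ρ) + exp (-ν * ρ)) / |b - ν|) :=
      add_le_add hfirst (mul_le_mul_of_nonneg_left hquot hA)
    _ = _ := by ring

theorem mul_exp_neg_mul_add_exp_neg_mul_le {C a c ρ : ℝ} (hC : 0 ≤ C) (hac : a ≤ c)
    (hρ : 0 ≤ ρ) : C * (exp (-a * ρ) + exp (-c * ρ)) ≤ 2 * C * exp (-a * ρ) := by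
  have : exp (-c * ρ) ≤ exp (-a * ρ) := by gcongr
  nlinarith

theorem abs_le_sqrt_mul_exp_of_sq_le {x E μ ρ : ℝ} (h : x ^ 2 ≤ E * exp (-2 * μ * ρ)) :
    |x| ≤ √E * exp (-μ * ρ) := by
  have hsq : exp (-2 * μ * ρ) = exp (-μ * ρ) ^ 2 := by rw [← exp_nat_mul]; ring_nf
  rw [← sqrt_sq_eq_abs, ← sqrt_sq (exp_pos (-μ * ρ)).le, ← sqrt_mul' _ (sq_nonneg _), ← hsq]
  exact sqrt_le_sqrt h

theorem deriv_sq_add_four_mul_sq_le {α K D μ : ℝ} {v : ℝ → ℝ} (hK : 0 ≤ K) (hD : 0 ≤ D)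
    (hv : ∀ ρ ≥ 0, deriv (fun t => v t ^ 2) ρ + (4 - 2 * |v ρ|) * v ρ ^ 2
      ≤ 2 * K * exp (-α * ρ) * |v ρ|)
    (hvD : ∀ ρ ≥ 0, |v ρ| ≤ D * exp (-μ * ρ)) {ρ : ℝ} (hρ : 0 ≤ ρ) :
    deriv (fun t => v t ^ 2) ρ + 4 * v ρ ^ 2
      ≤ (2 * D ^ 3 + 2 * K * D) * exp (-min (3 * μ) (α + μ) * ρ) := by
  have hcube : |v ρ| ^ 3 ≤ D ^ 3 * exp (-min (3 * μ) (α + μ) * ρ) := calc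
    |v ρ| ^ 3 ≤ (D * exp (-μ * ρ)) ^ 3 := pow_le_pow_left₀ (abs_nonneg _) (hvD ρ hρ) 3
    _ = D ^ 3 * exp (-(3 * μ) * ρ) := by rw [mul_pow, ← exp_nat_mul]; ring_nf
    _ ≤ D ^ 3 * exp (-min (3 * μ) (α + μ) * ρ) := by gcongr; exact min_le_left _ _
  have hforce : exp (-α * ρ) * |v ρ| ≤ D * exp (-min (3 * μ) (α + μ) * ρ) := calc
    exp (-α * ρ) * |v ρ| ≤ exp (-α * ρ) * (D * exp (-μ * ρ)) := by gcongr; exact hvD ρ hρ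
    _ = D * exp (-(α + μ) * ρ) := by rw [mul_left_comm, ← exp_add]; ring_nf
    _ ≤ D * exp (-min (3 * μ) (α + μ) * ρ) := by gcongr; exact min_le_right _ _
  have hcube_eq : |v ρ| * v ρ ^ 2 = |v ρ| ^ 3 := by rw [← sq_abs]; ring
  nlinarith [hv ρ hρ, mul_le_mul_of_nonneg_left hforce (by positivity : (0 : ℝ) ≤ 2 * K)]

theorem exists_sq_le_of_abs_le_mul_exp {α K D μ b : ℝ} (v₀ : ℝ) (hK : 0 ≤ K) (hD : 0 < D)
    (hb : b ≤ 4) (hbν : b ≠ min (3 * μ) (α + μ)) :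
    ∃ C > 0, ∀ v : ℝ → ℝ, (∀ ρ ≥ 0, DifferentiableAt ℝ v ρ) →
      (∀ ρ ≥ 0, deriv (fun t => v t ^ 2) ρ + (4 - 2 * |v ρ|) * v ρ ^ 2
        ≤ 2 * K * exp (-α * ρ) * |v ρ|) →
      (∀ ρ ≥ 0, |v ρ| ≤ D * exp (-μ * ρ)) → v 0 = v₀ →
      ∀ ρ ≥ 0, v ρ ^ 2 ≤ C * (exp (-b * ρ) + exp (-min (3 * μ) (α + μ) * ρ)) := by
  have hgap : 0 < |b - min (3 * μ) (α + μ)| := abs_pos.mpr (sub_ne_zero.mpr hbν)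
  refine ⟨v₀ ^ 2 + (2 * D ^ 3 + 2 * K * D) / |b - min (3 * μ) (α + μ)|, by positivity, ?_⟩
  rintro v hdiff hv hvD rfl ρ hρ
  refine (le_of_deriv_add_mul_le_mul_exp (w := fun t => v t ^ 2) hbν
    (fun t ht => (hdiff t ht).pow 2) (fun t ht => ?_) hρ).trans
    (mul_exp_add_div_le (sq_nonneg _) (by positivity))
  have := deriv_sq_add_four_mul_sq_le hK hD.le hv hvD ht
  nlinarith [sq_nonneg (v t)]

theorem exists_sq_le_mul_exp_of_min_eq_four {α K D μ : ℝ} (v₀ : ℝ) (hα : 2 < α) (hK : 0 ≤ K)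
    (hD : 0 < D) (hν : min (3 * μ) (α + μ) = 4) :
    ∃ C > 0, ∀ v : ℝ → ℝ, (∀ ρ ≥ 0, DifferentiableAt ℝ v ρ) →
      (∀ ρ ≥ 0, deriv (fun t => v t ^ 2) ρ + (4 - 2 * |v ρ|) * v ρ ^ 2
        ≤ 2 * K * exp (-α * ρ) * |v ρ|) →
      (∀ ρ ≥ 0, |v ρ| ≤ D * exp (-μ * ρ)) → v 0 = v₀ →
      ∀ ρ ≥ 0, v ρ ^ 2 ≤ C * exp (-4 * ρ) := by
  -- `ε ≤ min (α - 2) 1` keeps the second forcing rate `min (6 - 3ε/2) (α + 2 - ε/2)` above `4`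
  set ε := min (α - 2) 1
  have hε : 0 < ε := lt_min (by linarith) one_pos
  have hεα : ε ≤ α - 2 := min_le_left _ _
  have hε1 : ε ≤ 1 := min_le_right _ _
  obtain ⟨C₁, hC₁, hpass₁⟩ := exists_sq_le_of_abs_le_mul_exp (b := 4 - ε) v₀ hK hD
    (by linarith) (by rw [hν]; linarith)
  obtain ⟨C₂, hC₂, hpass₂⟩ := exists_sq_le_of_abs_le_mul_exp (α := α) (μ := 2 - ε / 2) (b := 4)
    v₀ hK (sqrt_pos.mpr (by positivity : 0 < 2 * C₁)) le_rfl
    (ne_of_lt (lt_min (by linarith) (by linarith)))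
  refine ⟨2 * C₂, by positivity, fun v hdiff hv hvD hv₀ ρ hρ => ?_⟩
  have hrate : ∀ ρ ≥ (0:ℝ), v ρ ^ 2 ≤ 2 * C₁ * exp (-2 * (2 - ε / 2) * ρ) := fun ρ hρ => calc
    v ρ ^ 2 ≤ C₁ * (exp (-(4 - ε) * ρ) + exp (-4 * ρ)) := by
      simpa [hν] using hpass₁ v hdiff hv hvD hv₀ ρ hρ
    _ ≤ 2 * C₁ * exp (-(4 - ε) * ρ) := mul_exp_neg_mul_add_exp_neg_mul_le hC₁.le (by linarith) hρ
    _ = 2 * C₁ * exp (-2 * (2 - ε / 2) * ρ) := by ring_nf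
  calc v ρ ^ 2
      ≤ C₂ * (exp (-4 * ρ) + exp (-min (3 * (2 - ε / 2)) (α + (2 - ε / 2)) * ρ)) :=
        hpass₂ v hdiff hv (fun ρ hρ => abs_le_sqrt_mul_exp_of_sq_le (hrate ρ hρ)) hv₀ ρ hρ
    _ ≤ 2 * C₂ * exp (-4 * ρ) :=
      mul_exp_neg_mul_add_exp_neg_mul_le hC₂.le (le_min (by linarith) (by linarith)) hρ

theorem riccati_bootstrap_general (α K C₅ β v₀ : ℝ) (hα : 2 < α) (hK : 0 < K) :
    ∃ C₇ > 0, ∀ v : ℝ → ℝ,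
      (∀ ρ ≥ (0:ℝ), DifferentiableAt ℝ v ρ) →
      (∀ ρ ≥ (0:ℝ), deriv (fun t => (v t)^2) ρ + (4 - 2 * |v ρ|) * (v ρ)^2
          ≤ 2 * K * Real.exp (-α * ρ) * |v ρ|) →
      (∀ ρ ≥ (0:ℝ), |v ρ| ≤ C₅ * Real.exp (-ρ)) →
      (∀ ρ ≥ (0:ℝ), (v ρ)^2 ≤ Real.exp (-2 * β * ρ)) →
      v 0 = v₀ →
      ∀ ρ ≥ (0:ℝ), (v ρ)^2
          ≤ C₇ * (Real.exp (-4 * ρ) + Real.exp (-(min (3 * β) (α + β)) * ρ)) := by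
  have hdecay : ∀ v : ℝ → ℝ, (∀ ρ ≥ (0:ℝ), v ρ ^ 2 ≤ exp (-2 * β * ρ)) →
      ∀ ρ ≥ (0:ℝ), |v ρ| ≤ 1 * exp (-β * ρ) := fun v h ρ hρ => by
    simpa using abs_le_sqrt_mul_exp_of_sq_le (E := 1) (by simpa using h ρ hρ)
  by_cases hν : min (3 * β) (α + β) = 4
  · obtain ⟨C, hC, hbound⟩ := exists_sq_le_mul_exp_of_min_eq_four v₀ hα hK.le one_pos hν
    refine ⟨C, hC, fun v hdiff hv _ hβv hv₀ ρ hρ =>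
      (hbound v hdiff hv (hdecay v hβv) hv₀ ρ hρ).trans ?_⟩
    gcongr
    exact le_add_of_nonneg_right (exp_pos _).le
  · obtain ⟨C, hC, hbound⟩ := exists_sq_le_of_abs_le_mul_exp (b := 4) v₀ hK.le one_pos le_rfl
      (Ne.symm hν)
    exact ⟨C, hC, fun v hdiff hv _ hβv hv₀ => hbound v hdiff hv (hdecay v hβv) hv₀⟩

/-- **Bootstrapping step in the proof of Lemma 2.3.** Suppose `v` is differentiable with
`(v²)' + (4 - 2|v|)·v² ≤ 2K·exp(-αρ)·|v|`, `|v| ≤ C₅·exp(-ρ)` and `v² ≤ exp(-2βρ)` on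
`[0,∞)`, where `α > 2`, `K, C₅ > 0`, `β ≥ 1`. Then `v² ≤ C₇·(exp(-4ρ) + exp(-min(3β, α+β)·ρ))`
for a constant `C₇ > 0` depending only on `α`, `K`, `C₅`, `β` and `v 0`. -/
theorem riccati_bootstrap (α K C₅ β v₀ : ℝ) (hα : 2 < α) (hK : 0 < K) (hC₅ : 0 < C₅)
    (hβ : 1 ≤ β) :
    ∃ C₇ > 0, ∀ v : ℝ → ℝ,
      (∀ ρ ≥ (0:ℝ), DifferentiableAt ℝ v ρ) →
      (∀ ρ ≥ (0:ℝ), deriv (fun t => (v t)^2) ρ + (4 - 2 * |v ρ|) * (v ρ)^2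
          ≤ 2 * K * Real.exp (-α * ρ) * |v ρ|) →
      (∀ ρ ≥ (0:ℝ), |v ρ| ≤ C₅ * Real.exp (-ρ)) →
      (∀ ρ ≥ (0:ℝ), (v ρ)^2 ≤ Real.exp (-2 * β * ρ)) →
      v 0 = v₀ →
      ∀ ρ ≥ (0:ℝ), (v ρ)^2
          ≤ C₇ * (Real.exp (-4 * ρ) + Real.exp (-(min (3 * β) (α + β)) * ρ)) :=
  riccati_bootstrap_general α K C₅ β v₀ hα hK
end

section
/- Let n ≥ 1 be a natural number, and let A : ℝ → Matrix n n ℝ be continuously differentiable (entrywise) with A(ρ) symmetric for every ρ. Let λ_max(ρ) denote the largest eigenvalue of A(ρ). Suppose A′(ρ) + A(ρ)² = 1 + E(ρ) with each E(ρ) symmetric and of operator norm ‖E(ρ)‖ ≤ K·e^{−αρ} for constants K > 0, α > 0. Then at every point ρ₀ where λ_max is differentiable, |λ_max′(ρ₀) + λ_max(ρ₀)² − 1| ≤ K·e^{−αρ₀}. -/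
/-!
Let `v` be a unit eigenvector of `A ρ₀` for `λ_max ρ₀`. The Rayleigh quotient `ρ ↦ vᵀ A(ρ) v`
stays below `λ_max` and touches it at `ρ₀`, so the two have the same derivative there:
`λ_max'(ρ₀) = vᵀ A'(ρ₀) v`. Testing the Riccati equation against `v` then gives
`λ_max' + λ_max² - 1 = vᵀ E(ρ₀) v`, which is bounded by `‖E(ρ₀)‖`.
-/

open Filter Topology Matrix
open scoped MatrixOrder Matrix.Norms.L2Operator

theorem deriv_eq_of_hasDerivAt_of_eventuallyLE_of_eq {f g : ℝ → ℝ} {f' x : ℝ}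
    (hf : HasDerivAt f f' x) (hg : DifferentiableAt ℝ g x) (hle : f ≤ᶠ[𝓝 x] g)
    (hx : f x = g x) : deriv g x = f' := by
  have hmin : IsLocalMin (fun y => g y - f y) x :=
    hle.mono fun y hy => by simpa [hx] using hy
  have := deriv_fun_sub hg hf.differentiableAt ▸ hmin.deriv_eq_zero
  rw [hf.deriv] at this
  linarith

theorem hasDerivAt_dotProduct_mulVec {𝕜 n : Type*} [NontriviallyNormedField 𝕜] [Fintype n]
    {A : 𝕜 → Matrix n n 𝕜} {A' : Matrix n n 𝕜} {t : 𝕜}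
    (hA : ∀ i j, HasDerivAt (fun s => A s i j) (A' i j) t) (x : n → 𝕜) :
    HasDerivAt (fun s => x ⬝ᵥ (A s *ᵥ x)) (x ⬝ᵥ (A' *ᵥ x)) t :=
  HasDerivAt.fun_sum fun i _ =>
    (HasDerivAt.fun_sum fun j _ => (hA i j).mul_const (x j)).const_mul (x i)

section RealMatrix

variable {n : Type*} [Fintype n] [DecidableEq n]

theorem Matrix.abs_dotProduct_mulVec_le_l2_opNorm_mul (M : Matrix n n ℝ) (x : n → ℝ) :
    |x ⬝ᵥ (M *ᵥ x)| ≤ ‖M‖ * (x ⬝ᵥ x) := by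
  set y : EuclideanSpace ℝ n := WithLp.toLp 2 x
  have hxx : x ⬝ᵥ x = ‖y‖ ^ 2 := by
    rw [← real_inner_self_eq_norm_sq, EuclideanSpace.inner_eq_star_dotProduct]
    rfl
  have hxMx : x ⬝ᵥ (M *ᵥ x) = inner ℝ y ((EuclideanSpace.equiv n ℝ).symm (M *ᵥ x)) := by
    rw [EuclideanSpace.inner_eq_star_dotProduct, dotProduct_comm]
    rfl
  calc |x ⬝ᵥ (M *ᵥ x)| ≤ ‖y‖ * ‖(EuclideanSpace.equiv n ℝ).symm (M *ᵥ x)‖ :=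
        hxMx ▸ abs_real_inner_le_norm _ _
    _ ≤ ‖y‖ * (‖M‖ * ‖y‖) := by gcongr; exact M.l2_opNorm_mulVec y
    _ = ‖M‖ * (x ⬝ᵥ x) := by rw [hxx]; ring

variable {M : Matrix n n ℝ}

theorem Matrix.IsHermitian.dotProduct_mulVec_le_iSup_eigenvalues_mul (hM : M.IsHermitian)
    (x : n → ℝ) : x ⬝ᵥ (M *ᵥ x) ≤ (⨆ i, hM.eigenvalues i) * (x ⬝ᵥ x) := by
  have hle : M ≤ algebraMap ℝ _ (⨆ i, hM.eigenvalues i) := by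
    refine le_algebraMap_of_spectrum_le fun μ hμ => ?_
    rw [hM.spectrum_real_eq_range_eigenvalues] at hμ
    obtain ⟨i, rfl⟩ := hμ
    exact le_ciSup (Set.finite_range _).bddAbove i
  simpa [sub_mulVec, Algebra.algebraMap_eq_smul_one, smul_mulVec, dotProduct_sub] using
    (Matrix.le_iff.mp hle).dotProduct_mulVec_nonneg x

theorem Matrix.IsHermitian.exists_mulVec_eq_iSup_eigenvalues_smul [Nonempty n]
    (hM : M.IsHermitian) :
    ∃ v : n → ℝ, v ⬝ᵥ v = 1 ∧ M *ᵥ v = (⨆ i, hM.eigenvalues i) • v := by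
  obtain ⟨i, hi⟩ := exists_eq_ciSup_of_finite (f := hM.eigenvalues)
  refine ⟨hM.eigenvectorBasis i, ?_, hi ▸ hM.mulVec_eigenvectorBasis i⟩
  have := real_inner_self_eq_norm_sq (hM.eigenvectorBasis i)
  rwa [hM.eigenvectorBasis.orthonormal.1 i, one_pow,
    EuclideanSpace.inner_eq_star_dotProduct] at this

end RealMatrix

theorem lambda_max_riccati_general (n : ℕ) (hn : 1 ≤ n) (K α : ℝ)
    (A A' E : ℝ → Matrix (Fin n) (Fin n) ℝ)
    (hA : ∀ ρ, (A ρ).IsHermitian)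
    (hderiv : ∀ ρ, ∀ i j, HasDerivAt (fun t => A t i j) (A' ρ i j) ρ)
    (heq : ∀ ρ, A' ρ + (A ρ)^2 = 1 + E ρ)
    (hEnorm : ∀ ρ, ‖E ρ‖ ≤ K * Real.exp (-α * ρ))
    (lmax : ℝ → ℝ) (hlmax : ∀ ρ, lmax ρ = ⨆ i, (hA ρ).eigenvalues i)
    (ρ₀ : ℝ) (hdiff : DifferentiableAt ℝ lmax ρ₀) :
    |deriv lmax ρ₀ + (lmax ρ₀)^2 - 1| ≤ K * Real.exp (-α * ρ₀) := by
  have : Nonempty (Fin n) := ⟨⟨0, hn⟩⟩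
  obtain ⟨v, hvv, hAv⟩ := (hA ρ₀).exists_mulVec_eq_iSup_eigenvalues_smul
  rw [← hlmax] at hAv
  have hderiv_eq : deriv lmax ρ₀ = v ⬝ᵥ (A' ρ₀ *ᵥ v) := by
    refine deriv_eq_of_hasDerivAt_of_eventuallyLE_of_eq
      (hasDerivAt_dotProduct_mulVec (hderiv ρ₀) v) hdiff (Eventually.of_forall fun ρ => ?_) ?_
    · simpa [hlmax, hvv] using (hA ρ).dotProduct_mulVec_le_iSup_eigenvalues_mul v
    · simp [hAv, hvv]
  have hsq : v ⬝ᵥ ((A ρ₀ ^ 2) *ᵥ v) = lmax ρ₀ ^ 2 := by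
    simp [pow_two, ← mulVec_mulVec, hAv, mulVec_smul, hvv]
  have hriccati : deriv lmax ρ₀ + lmax ρ₀ ^ 2 - 1 = v ⬝ᵥ (E ρ₀ *ᵥ v) := by
    have := congrArg (fun M => v ⬝ᵥ (M *ᵥ v)) (heq ρ₀)
    simp only [add_mulVec, dotProduct_add, one_mulVec, hsq, hvv] at this
    linarith
  calc |deriv lmax ρ₀ + lmax ρ₀ ^ 2 - 1| ≤ ‖E ρ₀‖ := by
        simpa [hriccati, hvv] using (E ρ₀).abs_dotProduct_mulVec_le_l2_opNorm_mul v
    _ ≤ K * Real.exp (-α * ρ₀) := hEnorm ρ₀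

/-- **Equation (2.5) in the proof of Lemma 2.4.** If `A : ℝ → Sym(n,ℝ)` is continuously
differentiable with `A' + A² = 1 + E` and `‖E ρ‖ ≤ K·exp(-αρ)`, then the largest
eigenvalue `λ_max` of `A` satisfies `|λ_max' + λ_max² - 1| ≤ K·exp(-αρ₀)` at every
point `ρ₀` where it is differentiable. -/
theorem lambda_max_riccati (n : ℕ) (hn : 1 ≤ n) (K α : ℝ) (hK : 0 < K) (hα : 0 < α)
    (A A' E : ℝ → Matrix (Fin n) (Fin n) ℝ)
    (hA : ∀ ρ, (A ρ).IsHermitian)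
    (hderiv : ∀ ρ, ∀ i j, HasDerivAt (fun t => A t i j) (A' ρ i j) ρ)
    (hcont : ∀ i j, Continuous fun ρ => A' ρ i j)
    (hEsymm : ∀ ρ, (E ρ).IsHermitian)
    (heq : ∀ ρ, A' ρ + (A ρ)^2 = 1 + E ρ)
    (hEnorm : ∀ ρ, ‖E ρ‖ ≤ K * Real.exp (-α * ρ))
    (lmax : ℝ → ℝ) (hlmax : ∀ ρ, lmax ρ = ⨆ i, (hA ρ).eigenvalues i)
    (ρ₀ : ℝ) (hdiff : DifferentiableAt ℝ lmax ρ₀) :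
    |deriv lmax ρ₀ + (lmax ρ₀)^2 - 1| ≤ K * Real.exp (-α * ρ₀) :=
  lambda_max_riccati_general n hn K α A A' E hA hderiv heq hEnorm lmax hlmax ρ₀ hdiff
end

section
/- Let n ≥ 1 be a natural number, and let A : ℝ → Matrix n n ℝ be continuously differentiable (entrywise) with A(ρ) symmetric for every ρ. Let λ_min(ρ) denote the smallest eigenvalue of A(ρ). Suppose A′(ρ) + A(ρ)² = 1 + E(ρ) with each E(ρ) symmetric and of operator norm ‖E(ρ)‖ ≤ K·e^{−αρ} for constants K > 0, α > 0. Then at every point ρ₀ where λ_min is differentiable, |λ_min′(ρ₀) + λ_min(ρ₀)² − 1| ≤ K·e^{−αρ₀}. -/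
/-!
Let `V` be a unit eigenvector of `A ρ₀` for `λ_min ρ₀`. The Rayleigh bound makes
`ρ ↦ Vᵀ A(ρ) V` lie above `λ_min` and touch it at `ρ₀`, so where `λ_min` is differentiable
the two slopes agree: `λ_min'(ρ₀) = Vᵀ A'(ρ₀) V = 1 + Vᵀ E(ρ₀) V - λ_min(ρ₀)²`, and
`|Vᵀ E(ρ₀) V| ≤ ‖E ρ₀‖`.
-/

open scoped Matrix.Norms.L2Operator
open Matrix

theorem deriv_eq_of_eventuallyLE_of_eq_of_hasDerivAt {f g : ℝ → ℝ} {f' x : ℝ}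
    (hle : g ≤ᶠ[nhds x] f) (heq : g x = f x) (hf : HasDerivAt f f' x)
    (hg : DifferentiableAt ℝ g x) : deriv g x = f' := by
  have hmin : IsLocalMin (f - g) x := hle.mono fun y hy => by simp [heq, sub_nonneg.mpr hy]
  have := hmin.hasDerivAt_eq_zero (hf.sub hg.hasDerivAt)
  linarith

namespace Matrix

variable {n : Type*} [Fintype n]

theorem hasDerivAt_dotProduct_mulVec {m : Type*} [Fintype m] {M : ℝ → Matrix m n ℝ}
    {M' : Matrix m n ℝ} {t : ℝ} (hM : ∀ i j, HasDerivAt (fun s => M s i j) (M' i j) t)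
    (x : m → ℝ) (y : n → ℝ) :
    HasDerivAt (fun s => x ⬝ᵥ (M s *ᵥ y)) (x ⬝ᵥ (M' *ᵥ y)) t := by
  simp only [dotProduct, mulVec, Finset.mul_sum]
  exact HasDerivAt.fun_sum fun i _ => HasDerivAt.fun_sum fun j _ =>
    ((hM i j).mul_const (y j)).const_mul (x i)

variable [DecidableEq n]

theorem IsHermitian.iInf_eigenvalues_mul_dotProduct_self_le {B : Matrix n n ℝ}
    (hB : B.IsHermitian) (x : n → ℝ) :
    (⨅ i, hB.eigenvalues i) * (x ⬝ᵥ x) ≤ x ⬝ᵥ (B *ᵥ x) := by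
  set c := ⨅ i, hB.eigenvalues i
  have hshift : (B - algebraMap ℝ _ c).PosSemidef := by
    refine posSemidef_iff_isHermitian_and_spectrum_nonneg.mpr
      ⟨hB.sub (isHermitian_diagonal _), ?_⟩
    rw [← spectrum.sub_singleton_eq, hB.spectrum_real_eq_range_eigenvalues]
    rintro _ ⟨_, ⟨i, rfl⟩, _, rfl, rfl⟩
    exact sub_nonneg.mpr (ciInf_le (Set.finite_range hB.eigenvalues).bddBelow i)
  have := hshift.dotProduct_mulVec_nonneg x
  rwa [star_trivial, sub_mulVec, dotProduct_sub, Algebra.algebraMap_eq_smul_one, smul_mulVec,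
    one_mulVec, dotProduct_smul, smul_eq_mul, sub_nonneg] at this

theorem IsHermitian.exists_unit_mulVec_eq_iInf_eigenvalues_smul [Nonempty n]
    {B : Matrix n n ℝ} (hB : B.IsHermitian) :
    ∃ v : n → ℝ, v ⬝ᵥ v = 1 ∧ B *ᵥ v = (⨅ i, hB.eigenvalues i) • v := by
  obtain ⟨i, hi⟩ := exists_eq_ciInf_of_finite (f := hB.eigenvalues)
  refine ⟨hB.eigenvectorBasis i, ?_, hi ▸ hB.mulVec_eigenvectorBasis i⟩
  have h : inner ℝ (hB.eigenvectorBasis i) (hB.eigenvectorBasis i) = 1 := by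
    rw [real_inner_self_eq_norm_sq, hB.eigenvectorBasis.orthonormal.1 i, one_pow]
  rwa [EuclideanSpace.inner_eq_star_dotProduct, star_trivial] at h

theorem abs_dotProduct_mulVec_le_l2_opNorm_mul_s6 (M : Matrix n n ℝ) (x : n → ℝ) :
    |x ⬝ᵥ (M *ᵥ x)| ≤ ‖M‖ * (x ⬝ᵥ x) := by
  have hinner : x ⬝ᵥ (M *ᵥ x) = inner ℝ (WithLp.toLp 2 x) (WithLp.toLp 2 (M *ᵥ x)) := by
    rw [EuclideanSpace.inner_toLp_toLp, star_trivial, dotProduct_comm]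
  have hnorm : x ⬝ᵥ x = ‖WithLp.toLp 2 x‖ ^ 2 := by
    rw [← real_inner_self_eq_norm_sq, EuclideanSpace.inner_toLp_toLp, star_trivial]
  calc |x ⬝ᵥ (M *ᵥ x)| ≤ ‖WithLp.toLp 2 x‖ * ‖WithLp.toLp 2 (M *ᵥ x)‖ :=
        hinner ▸ abs_real_inner_le_norm _ _
    _ ≤ ‖WithLp.toLp 2 x‖ * (‖M‖ * ‖WithLp.toLp 2 x‖) :=
        mul_le_mul_of_nonneg_left (M.l2_opNorm_mulVec (WithLp.toLp 2 x)) (norm_nonneg _)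
    _ = ‖M‖ * (x ⬝ᵥ x) := by rw [hnorm]; ring

end Matrix

theorem lambda_min_riccati_general (n : ℕ) (hn : 1 ≤ n) (K α : ℝ)
    (A A' E : ℝ → Matrix (Fin n) (Fin n) ℝ)
    (hA : ∀ ρ, (A ρ).IsHermitian)
    (hderiv : ∀ ρ, ∀ i j, HasDerivAt (fun t => A t i j) (A' ρ i j) ρ)
    (heq : ∀ ρ, A' ρ + (A ρ)^2 = 1 + E ρ)
    (hEnorm : ∀ ρ, ‖E ρ‖ ≤ K * Real.exp (-α * ρ))
    (lmin : ℝ → ℝ) (hlmin : ∀ ρ, lmin ρ = ⨅ i, (hA ρ).eigenvalues i)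
    (ρ₀ : ℝ) (hdiff : DifferentiableAt ℝ lmin ρ₀) :
    |deriv lmin ρ₀ + (lmin ρ₀)^2 - 1| ≤ K * Real.exp (-α * ρ₀) := by
  have : Nonempty (Fin n) := ⟨⟨0, hn⟩⟩
  obtain ⟨V, hVV, hAV⟩ := (hA ρ₀).exists_unit_mulVec_eq_iInf_eigenvalues_smul
  rw [← hlmin] at hAV
  have hslope : deriv lmin ρ₀ = V ⬝ᵥ (A' ρ₀ *ᵥ V) :=
    deriv_eq_of_eventuallyLE_of_eq_of_hasDerivAt
      (Filter.Eventually.of_forall fun ρ => by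
        simpa [hlmin, hVV] using (hA ρ).iInf_eigenvalues_mul_dotProduct_self_le V)
      (by rw [hAV, dotProduct_smul, smul_eq_mul, hVV, mul_one])
      (hasDerivAt_dotProduct_mulVec (hderiv ρ₀) V V) hdiff
  have hsq : V ⬝ᵥ (A ρ₀ ^ 2 *ᵥ V) = lmin ρ₀ ^ 2 := by
    rw [sq, ← mulVec_mulVec, hAV, mulVec_smul, hAV, smul_smul, dotProduct_smul, hVV,
      smul_eq_mul, mul_one, sq]
  have hriccati : V ⬝ᵥ (A' ρ₀ *ᵥ V) + lmin ρ₀ ^ 2 = 1 + V ⬝ᵥ (E ρ₀ *ᵥ V) := by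
    rw [← hsq, ← dotProduct_add, ← add_mulVec, heq, add_mulVec, one_mulVec, dotProduct_add, hVV]
  calc |deriv lmin ρ₀ + lmin ρ₀ ^ 2 - 1| = |V ⬝ᵥ (E ρ₀ *ᵥ V)| := by
        rw [hslope, hriccati, add_sub_cancel_left]
    _ ≤ ‖E ρ₀‖ * (V ⬝ᵥ V) := abs_dotProduct_mulVec_le_l2_opNorm_mul_s6 _ _
    _ ≤ K * Real.exp (-α * ρ₀) := by rw [hVV, mul_one]; exact hEnorm ρ₀

/-- **Equation (2.6) in the proof of Lemma 2.4.** If `A : ℝ → Sym(n,ℝ)` is continuously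
differentiable with `A' + A² = 1 + E` and `‖E ρ‖ ≤ K·exp(-αρ)`, then the smallest
eigenvalue `λ_min` of `A` satisfies `|λ_min' + λ_min² - 1| ≤ K·exp(-αρ₀)` at every
point `ρ₀` where it is differentiable. -/
theorem lambda_min_riccati (n : ℕ) (hn : 1 ≤ n) (K α : ℝ) (hK : 0 < K) (hα : 0 < α)
    (A A' E : ℝ → Matrix (Fin n) (Fin n) ℝ)
    (hA : ∀ ρ, (A ρ).IsHermitian)
    (hderiv : ∀ ρ, ∀ i j, HasDerivAt (fun t => A t i j) (A' ρ i j) ρ)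
    (hcont : ∀ i j, Continuous fun ρ => A' ρ i j)
    (hEsymm : ∀ ρ, (E ρ).IsHermitian)
    (heq : ∀ ρ, A' ρ + (A ρ)^2 = 1 + E ρ)
    (hEnorm : ∀ ρ, ‖E ρ‖ ≤ K * Real.exp (-α * ρ))
    (lmin : ℝ → ℝ) (hlmin : ∀ ρ, lmin ρ = ⨅ i, (hA ρ).eigenvalues i)
    (ρ₀ : ℝ) (hdiff : DifferentiableAt ℝ lmin ρ₀) :
    |deriv lmin ρ₀ + (lmin ρ₀)^2 - 1| ≤ K * Real.exp (-α * ρ₀) :=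
  lambda_min_riccati_general n hn K α A A' E hA hderiv heq hEnorm lmin hlmin ρ₀ hdiff
end

section
/- Let n ≥ 3 be a natural number and define ψ : ℝⁿ → ℝ by ψ(x) = ((1 + |x|²)/2)^{(2−n)/2}, where |x| is the Euclidean norm. Then ψ and its gradient satisfy: n(n−1)·ω_n^{2/n} = (4(n−1)/(n−2)) · (∫_{ℝⁿ} |∇ψ(x)|² dx) / (∫_{ℝⁿ} ψ(x)^{2n/(n−2)} dx)^{(n−2)/n}, where ω_n = 2·π^{(n+1)/2}/Γ((n+1)/2) is the volume of the unit n-sphere Sⁿ ⊂ ℝ^{n+1}, ∇ψ denotes the (Fréchet) gradient of ψ, and the integrals are Lebesgue integrals over ℝⁿ (both of which are finite). -/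
/-!
Both integrands are radial: `ψ^{2n/(n-2)} = 2ⁿ (1 + |x|²)^{-n}` and
`|∇ψ|² = ((n-2)²/4) 2ⁿ (1 + |x|²)^{-n} |x|²`. In polar coordinates, the substitutions `u = y²`
and `u = t/(1-t)` turn `∫ (1 + |x|²)^{-s}` into a Beta integral, with value
`π^{n/2} Γ(s - n/2) / Γ(s)`. Writing `|x|² = (1 + |x|²) - 1` makes the gradient integral
`n/(n-2)` times the other one, and Legendre's duplication formula identifies
`2ⁿ ∫ (1 + |x|²)^{-n}` with `ω_n`: stereographic projection pulls the volume form of the round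
sphere back to `(2/(1 + |x|²))ⁿ dx`.
-/

open MeasureTheory Real Set Module

theorem Real.integral_Ioo_rpow_mul_one_sub_rpow {u v : ℝ} (hu : 0 < u) (hv : 0 < v) :
    ∫ t in Ioo (0 : ℝ) 1, t ^ (u - 1) * (1 - t) ^ (v - 1) = Gamma u * Gamma v / Gamma (u + v) := by
  have hbeta : Complex.betaIntegral u v =
      ((∫ t in Ioo (0 : ℝ) 1, t ^ (u - 1) * (1 - t) ^ (v - 1) : ℝ) : ℂ) := by
    rw [Complex.betaIntegral, intervalIntegral.integral_of_le zero_le_one,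
      integral_Ioc_eq_integral_Ioo, ← integral_complex_ofReal]
    refine setIntegral_congr_fun measurableSet_Ioo fun t ht => ?_
    push_cast [Complex.ofReal_cpow ht.1.le, Complex.ofReal_cpow (sub_nonneg.2 ht.2.le)]
    rfl
  have h := Complex.betaIntegral_eq_Gamma_mul_div u v (by simpa) (by simpa)
  rw [hbeta, ← Complex.ofReal_add, Complex.Gamma_ofReal, Complex.Gamma_ofReal,
    Complex.Gamma_ofReal] at h
  exact_mod_cast h

theorem image_div_one_sub_Ioo : (fun t : ℝ => t / (1 - t)) '' Ioo 0 1 = Ioi 0 := by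
  ext y
  constructor
  · rintro ⟨t, ⟨ht0, ht1⟩, rfl⟩
    exact div_pos ht0 (sub_pos.2 ht1)
  · intro (hy : 0 < y)
    refine ⟨y / (1 + y), ⟨by positivity, (div_lt_one (by positivity)).2 (by linarith)⟩, ?_⟩
    field_simp
    ring

theorem integral_Ioi_rpow_mul_one_add_rpow_neg {b s : ℝ} (hb : 0 < b) (hbs : b < s) :
    ∫ u in Ioi (0 : ℝ), u ^ (b - 1) * (1 + u) ^ (-s) = Gamma b * Gamma (s - b) / Gamma s := by
  have hderiv : ∀ t ∈ Ioo (0 : ℝ) 1,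
      HasDerivWithinAt (fun t => t / (1 - t)) (((1 - t) ^ 2)⁻¹) (Ioo 0 1) t := by
    intro t ht
    have h := (hasDerivAt_id t).div ((hasDerivAt_const t 1).sub (hasDerivAt_id t))
      (sub_pos.2 ht.2).ne'
    refine (h.congr_deriv ?_).hasDerivWithinAt
    simp only [Pi.sub_apply, id]
    field_simp
    ring
  have hinj : InjOn (fun t : ℝ => t / (1 - t)) (Ioo 0 1) := by
    intro t ht t' ht' h
    have h1 : (1 : ℝ) - t ≠ 0 := (sub_pos.2 ht.2).ne'
    have h2 : (1 : ℝ) - t' ≠ 0 := (sub_pos.2 ht'.2).ne'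
    field_simp at h
    linarith
  have hbeta := Real.integral_Ioo_rpow_mul_one_sub_rpow hb (sub_pos.2 hbs)
  rw [add_sub_cancel] at hbeta
  rw [← image_div_one_sub_Ioo, integral_image_eq_integral_abs_deriv_smul measurableSet_Ioo
    hderiv hinj, ← hbeta]
  refine setIntegral_congr_fun measurableSet_Ioo fun t ⟨ht0, ht1⟩ => ?_
  have h1 : 0 < 1 - t := sub_pos.2 ht1
  have h2 : 1 + t / (1 - t) = (1 - t)⁻¹ := by field_simp; ring
  rw [smul_eq_mul, h2, abs_of_pos (by positivity), div_rpow ht0.le h1.le, inv_rpow h1.le,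
    rpow_neg h1.le, inv_inv, rpow_sub h1, rpow_sub h1, rpow_sub h1, rpow_one]
  field_simp

theorem integral_Ioi_rpow_mul_one_add_sq_rpow_neg {a s : ℝ} (ha : 0 < a) (has : a < 2 * s) :
    ∫ y in Ioi (0 : ℝ), y ^ (a - 1) * (1 + y ^ 2) ^ (-s) =
      Gamma (a / 2) * Gamma (s - a / 2) / (2 * Gamma s) := by
  have h := integral_comp_rpow_Ioi (fun u => u ^ (a / 2 - 1) * (1 + u) ^ (-s)) two_ne_zero
  rw [integral_Ioi_rpow_mul_one_add_rpow_neg (by linarith) (by linarith)] at h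
  rw [mul_comm 2, ← div_div, ← h, eq_div_iff two_ne_zero, ← integral_mul_const]
  refine setIntegral_congr_fun measurableSet_Ioi fun y (hy : 0 < y) => ?_
  have hpow : y ^ (2 - 1 : ℝ) * (y ^ (2 : ℝ)) ^ (a / 2 - 1) = y ^ (a - 1) := by
    rw [← rpow_mul hy.le, ← rpow_add hy]
    ring_nf
  rw [smul_eq_mul, abs_two, ← hpow, rpow_two]
  ring

theorem one_add_sq_rpow_neg_mul_sq (r s : ℝ) :
    (1 + r ^ 2) ^ (-s) * r ^ 2 = (1 + r ^ 2) ^ (-(s - 1)) - (1 + r ^ 2) ^ (-s) := by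
  rw [neg_sub, rpow_sub (by positivity), rpow_neg (by positivity), rpow_one]
  field_simp
  ring

theorem div_two_rpow_neg {a : ℝ} (ha : 0 ≤ a) (s : ℝ) : (a / 2) ^ (-s) = 2 ^ s * a ^ (-s) := by
  rw [div_rpow ha zero_le_two, rpow_neg zero_le_two, div_inv_eq_mul, mul_comm]

theorem Real.two_rpow_mul_pi_rpow_mul_Gamma_half_div_Gamma {d : ℝ} (hd : 0 < d) :
    2 ^ d * (π ^ (d / 2) * Gamma (d / 2) / Gamma d) =
      2 * π ^ ((d + 1) / 2) / Gamma ((d + 1) / 2) := by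
  have hdup := Gamma_mul_Gamma_add_half (d / 2)
  rw [mul_div_cancel₀ d two_ne_zero, ← add_div, rpow_sub two_pos, rpow_one] at hdup
  have := (Gamma_pos_of_pos hd).ne'
  have := (Gamma_pos_of_pos (by positivity : 0 < (d + 1) / 2)).ne'
  have := (rpow_pos_of_pos two_pos d).ne'
  rw [add_div, rpow_add pi_pos, ← sqrt_eq_rpow]
  field_simp
  linear_combination 2 ^ d * hdup + Gamma d * 2 * √π * mul_inv_cancel₀ this

section Integrals

variable {E : Type*} [NormedAddCommGroup E] [InnerProductSpace ℝ E] [FiniteDimensional ℝ E]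
  [MeasurableSpace E] [BorelSpace E]

theorem integrable_one_add_norm_sq_rpow_neg {s : ℝ} (hs : (finrank ℝ E : ℝ) / 2 < s) :
    Integrable (fun x : E => (1 + ‖x‖ ^ 2) ^ (-s)) := by
  have h := integrable_rpow_neg_one_add_norm_sq (E := E) (μ := volume) (r := 2 * s) (by linarith)
  simpa only [neg_div, mul_div_cancel_left₀ s two_ne_zero] using h

theorem integrable_one_add_norm_sq_rpow_neg_mul_norm_sq {s : ℝ}
    (hs : (finrank ℝ E : ℝ) / 2 + 1 < s) :
    Integrable (fun x : E => (1 + ‖x‖ ^ 2) ^ (-s) * ‖x‖ ^ 2) := by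
  simp_rw [one_add_sq_rpow_neg_mul_sq]
  exact (integrable_one_add_norm_sq_rpow_neg (by linarith)).sub
    (integrable_one_add_norm_sq_rpow_neg (by linarith))

variable [Nontrivial E]

theorem integral_one_add_norm_sq_rpow_neg {s : ℝ} (hs : (finrank ℝ E : ℝ) / 2 < s) :
    ∫ x : E, (1 + ‖x‖ ^ 2) ^ (-s) =
      π ^ ((finrank ℝ E : ℝ) / 2) * Gamma (s - finrank ℝ E / 2) / Gamma s := by
  have hd : (0 : ℝ) < finrank ℝ E := Nat.cast_pos.2 finrank_pos
  have hradial : ∫ y in Ioi (0 : ℝ), y ^ (finrank ℝ E - 1) • (1 + y ^ 2) ^ (-s) =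
      Gamma (finrank ℝ E / 2) * Gamma (s - finrank ℝ E / 2) / (2 * Gamma s) := by
    rw [← integral_Ioi_rpow_mul_one_add_sq_rpow_neg hd (by linarith)]
    refine setIntegral_congr_fun measurableSet_Ioi fun y _ => ?_
    rw [smul_eq_mul, ← rpow_natCast, Nat.cast_sub finrank_pos, Nat.cast_one]
  have hball : volume.real (Metric.ball (0 : E) 1) =
      π ^ ((finrank ℝ E : ℝ) / 2) / (finrank ℝ E / 2 * Gamma (finrank ℝ E / 2)) := by
    rw [measureReal_def, InnerProductSpace.volume_ball, ENNReal.ofReal_one, one_pow, one_mul,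
      ENNReal.toReal_ofReal (by positivity), Gamma_add_one (by positivity), sqrt_eq_rpow,
      ← rpow_natCast, ← rpow_mul pi_pos.le, one_div_mul_eq_div]
  rw [integral_fun_norm_addHaar volume (fun r => (1 + r ^ 2) ^ (-s)), hradial, hball,
    nsmul_eq_mul, smul_eq_mul]
  have := (Gamma_pos_of_pos (half_pos hd)).ne'
  field_simp

theorem integral_one_add_norm_sq_rpow_neg_mul_norm_sq {s : ℝ}
    (hs : (finrank ℝ E : ℝ) / 2 + 1 < s) :
    ∫ x : E, (1 + ‖x‖ ^ 2) ^ (-s) * ‖x‖ ^ 2 =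
      finrank ℝ E / (2 * s - 2 - finrank ℝ E) * ∫ x : E, (1 + ‖x‖ ^ 2) ^ (-s) := by
  simp_rw [one_add_sq_rpow_neg_mul_sq]
  rw [integral_sub (integrable_one_add_norm_sq_rpow_neg (by linarith))
    (integrable_one_add_norm_sq_rpow_neg (by linarith)), integral_one_add_norm_sq_rpow_neg
    (by linarith), integral_one_add_norm_sq_rpow_neg (by linarith)]
  obtain ⟨t, rfl⟩ : ∃ t, s = t + 1 := ⟨s - 1, by ring⟩
  have ht : 0 < t - finrank ℝ E / 2 := by linarith
  have ht0 : 0 < t := by linarith [(Nat.cast_nonneg _ : (0 : ℝ) ≤ finrank ℝ E)]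
  rw [add_sub_cancel_right, add_sub_right_comm t 1, Gamma_add_one ht.ne',
    Gamma_add_one ht0.ne']
  have := (Gamma_pos_of_pos ht).ne'
  have := (Gamma_pos_of_pos ht0).ne'
  rw [show 2 * (t + 1) - 2 - finrank ℝ E = 2 * (t - finrank ℝ E / 2) by ring]
  have : 2 * t - finrank ℝ E ≠ 0 := by linarith
  field_simp
  ring

theorem two_rpow_finrank_mul_integral_one_add_norm_sq_rpow_neg_finrank :
    2 ^ (finrank ℝ E : ℝ) * ∫ x : E, (1 + ‖x‖ ^ 2) ^ (-(finrank ℝ E : ℝ)) =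
      2 * π ^ (((finrank ℝ E : ℝ) + 1) / 2) / Gamma (((finrank ℝ E : ℝ) + 1) / 2) := by
  have hd : (0 : ℝ) < finrank ℝ E := Nat.cast_pos.2 finrank_pos
  rw [integral_one_add_norm_sq_rpow_neg (by linarith), sub_half,
    Real.two_rpow_mul_pi_rpow_mul_Gamma_half_div_Gamma hd]

end Integrals

section Gradient

variable {E : Type*} [NormedAddCommGroup E] [InnerProductSpace ℝ E] [CompleteSpace E]

theorem hasGradientAt_half_one_add_norm_sq_rpow (p : ℝ) (x : E) :
    HasGradientAt (fun y : E => ((1 + ‖y‖ ^ 2) / 2) ^ p)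
      ((p * ((1 + ‖x‖ ^ 2) / 2) ^ (p - 1)) • x) x := by
  have hσ : HasFDerivAt (fun y : E => (1 + ‖y‖ ^ 2) / 2) (innerSL ℝ x) x := by
    have h := ((hasFDerivAt_id x).norm_sq.const_add 1).mul_const (2⁻¹ : ℝ)
    simp only [id, ← div_eq_mul_inv] at h
    refine h.congr_fderiv ?_
    ext y
    simp
  rw [hasGradientAt_iff_hasFDerivAt]
  refine ((hasDerivAt_rpow_const (p := p) (Or.inl (by positivity))).comp_hasFDerivAt x
    hσ).congr_fderiv ?_
  ext y
  simp

theorem norm_gradient_half_one_add_norm_sq_rpow_sq (p : ℝ) (x : E) :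
    ‖gradient (fun y : E => ((1 + ‖y‖ ^ 2) / 2) ^ p) x‖ ^ 2 =
      p ^ 2 * ((1 + ‖x‖ ^ 2) / 2) ^ (2 * (p - 1)) * ‖x‖ ^ 2 := by
  rw [(hasGradientAt_half_one_add_norm_sq_rpow p x).gradient, norm_smul, Real.norm_eq_abs,
    mul_pow, sq_abs, mul_pow, ← rpow_two (_ ^ _), ← rpow_mul (by positivity), mul_comm _ 2]

end Gradient

/-- **Identity (3.6) in the proof of Lemma 3.2.** For `n ≥ 3` and
`ψ(x) = ((1+|x|²)/2)^{(2-n)/2}` on `ℝⁿ`, both `∫|∇ψ|²` and `∫ψ^{2n/(n-2)}` are finite and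
`n(n-1)·ω_n^{2/n} = (4(n-1)/(n-2))·(∫|∇ψ|²)/(∫ψ^{2n/(n-2)})^{(n-2)/n}`, where
`ω_n = 2π^{(n+1)/2}/Γ((n+1)/2)` is the volume of the unit `n`-sphere. -/
theorem sobolev_quotient_of_psi (n : ℕ) (hn : 3 ≤ n)
    (ψ : EuclideanSpace ℝ (Fin n) → ℝ)
    (hψ : ∀ x, ψ x = ((1 + ‖x‖^2)/2) ^ (((2:ℝ) - n)/2))
    (ωn : ℝ) (hωn : ωn = 2 * Real.pi ^ (((n:ℝ) + 1)/2) / Real.Gamma (((n:ℝ) + 1)/2)) :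
    (Integrable fun x => ‖gradient ψ x‖^2) ∧
    (Integrable fun x => ψ x ^ ((2 * (n:ℝ))/((n:ℝ) - 2))) ∧
    (n:ℝ) * ((n:ℝ) - 1) * ωn ^ ((2:ℝ)/(n:ℝ)) =
      (4 * ((n:ℝ) - 1)/((n:ℝ) - 2)) * (∫ x, ‖gradient ψ x‖^2) /
        (∫ x, ψ x ^ ((2 * (n:ℝ))/((n:ℝ) - 2))) ^ (((n:ℝ) - 2)/(n:ℝ)) := by
  have hn3 : (3 : ℝ) ≤ n := by exact_mod_cast hn
  have hn2 : (n : ℝ) - 2 ≠ 0 := by linarith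
  have : Nontrivial (EuclideanSpace ℝ (Fin n)) :=
    Module.nontrivial_of_finrank_pos (R := ℝ) (by simp; omega)
  have hdim : (finrank ℝ (EuclideanSpace ℝ (Fin n)) : ℝ) = n := by simp
  have hpow (x : EuclideanSpace ℝ (Fin n)) :
      ψ x ^ (2 * (n : ℝ) / (n - 2)) = 2 ^ (n : ℝ) * (1 + ‖x‖ ^ 2) ^ (-(n : ℝ)) := by
    rw [hψ, ← rpow_mul (by positivity), ← div_two_rpow_neg (by positivity)]
    congr 1
    field_simp
    ring
  have hgrad (x : EuclideanSpace ℝ (Fin n)) : ‖gradient ψ x‖ ^ 2 =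
      ((n : ℝ) - 2) ^ 2 / 4 * 2 ^ (n : ℝ) * ((1 + ‖x‖ ^ 2) ^ (-(n : ℝ)) * ‖x‖ ^ 2) := by
    rw [funext hψ, norm_gradient_half_one_add_norm_sq_rpow_sq,
      show 2 * ((2 - n) / 2 - 1) = -(n : ℝ) by ring, div_two_rpow_neg (by positivity)]
    ring
  have hJ : ∫ x : EuclideanSpace ℝ (Fin n), (1 + ‖x‖ ^ 2) ^ (-(n : ℝ)) = ωn / 2 ^ (n : ℝ) := by
    rw [eq_div_iff (by positivity), mul_comm, hωn]
    simpa only [hdim] using two_rpow_finrank_mul_integral_one_add_norm_sq_rpow_neg_finrank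
      (E := EuclideanSpace ℝ (Fin n))
  have hωpos : 0 < ωn := hωn ▸ div_pos (by positivity) (Gamma_pos_of_pos (by positivity))
  simp_rw [hpow, hgrad]
  refine ⟨(integrable_one_add_norm_sq_rpow_neg_mul_norm_sq (by linarith)).const_mul _,
    (integrable_one_add_norm_sq_rpow_neg (by linarith)).const_mul _, ?_⟩
  rw [integral_const_mul, integral_const_mul, integral_one_add_norm_sq_rpow_neg_mul_norm_sq
    (by linarith), hdim, hJ, mul_div_cancel₀ _ (by positivity),
    show (2 : ℝ) * n - 2 - n = n - 2 by ring,
    show (2 : ℝ) / n = 1 - (n - 2) / n by field_simp; ring, rpow_sub hωpos, rpow_one]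
  have := (rpow_pos_of_pos hωpos (((n : ℝ) - 2) / n)).ne'
  field_simp
end
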